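/- arXiv:2310.08862 — 5 statements merged into one kernel-verified Lean document; each statement's English description precedes it below -/
import Mathlib

section
/- Let p > 1, γ ∈ ℝ, and ω > γ²/4. Then the function Q = Q_{ω,γ} is strictly positive and even on ℝ, continuous on ℝ, twice continuously differentiable on ℝ \ {0}, satisfies the stationary equation −Q''(x) + ω·Q(x) = Q(x)^p for every x ≠ 0, the one-sided derivatives Q'(0⁺) := lim_{x→0⁺} Q'(x) and Q'(0⁻) := lim_{x→0⁻} Q'(x) exist, and they satisfy the jump condition Q'(0⁺) − Q'(0⁻) = −γ·Q(0). -/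
open Real Filter Set

/-- Inverse hyperbolic tangent. -/
noncomputable def artanh (y : ℝ) : ℝ := (1 / 2) * Real.log ((1 + y) / (1 - y))

/-- The ground state profile `Q_{ω,γ}`. -/
noncomputable def Qsol (p γ ω : ℝ) (x : ℝ) : ℝ :=
  (((p + 1) * ω / 2) *
      (1 / Real.cosh (((p - 1) * Real.sqrt ω / 2) * |x| + _root_.artanh (γ / (2 * Real.sqrt ω)))) ^ 2)
    ^ (1 / (p - 1))

/-!
Write `Q = q ∘ |·|` with `q y = (A sech² (k y + a)) ^ (1 / (p - 1))`, where `A = (p + 1) ω / 2`,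
`k = (p - 1) √ω / 2` and `a = artanh (γ / (2 √ω))`. For every shift `a` one has
`q' = -√ω tanh (k y + a) q`, and since `q ^ (p - 1) = A sech² (k y + a)`, also `q'' = ω q - q ^ p`.
Off the origin `Q` agrees locally with `q` or `y ↦ q (-y)`, so it solves the same equation, and the
one-sided limits of `Q'` at `0` are `±q'(0)`. Their difference is
`2 q'(0) = -2 √ω tanh a · q(0) = -γ q(0)`.
-/

open Topology

section CompAbs

variable {F : Type*} {f : ℝ → F} {x : ℝ}

theorem comp_abs_eventuallyEq_of_pos (hx : 0 < x) : (fun y => f |y|) =ᶠ[𝓝 x] f :=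
  eventually_of_mem (Ioi_mem_nhds hx) fun y hy => by simp only [abs_of_pos (mem_Ioi.mp hy)]

theorem comp_abs_eventuallyEq_of_neg (hx : x < 0) : (fun y => f |y|) =ᶠ[𝓝 x] fun y => f (-y) :=
  eventually_of_mem (Iio_mem_nhds hx) fun y hy => by simp only [abs_of_neg (mem_Iio.mp hy)]

variable [NormedAddCommGroup F] [NormedSpace ℝ F]

theorem deriv_comp_abs_of_pos (hx : 0 < x) : deriv (fun y => f |y|) x = deriv f x :=
  (comp_abs_eventuallyEq_of_pos hx).deriv_eq

theorem deriv_comp_abs_of_neg (hx : x < 0) : deriv (fun y => f |y|) x = -deriv f (-x) := by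
  rw [(comp_abs_eventuallyEq_of_neg hx).deriv_eq, deriv_comp_neg]

theorem deriv_deriv_comp_abs (hx : x ≠ 0) :
    deriv (deriv fun y => f |y|) x = deriv (deriv f) |x| := by
  rcases hx.lt_or_gt with hx | hx
  · have h : deriv (fun y => f |y|) =ᶠ[𝓝 x] fun y => -deriv f (-y) :=
      eventually_of_mem (Iio_mem_nhds hx) fun y hy => deriv_comp_abs_of_neg hy
    rw [h.deriv_eq, deriv.fun_neg, deriv_comp_neg, neg_neg, abs_of_neg hx]
  · have h : deriv (fun y => f |y|) =ᶠ[𝓝 x] deriv f :=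
      eventually_of_mem (Ioi_mem_nhds hx) fun y hy => deriv_comp_abs_of_pos hy
    rw [h.deriv_eq, abs_of_pos hx]

theorem tendsto_deriv_comp_abs_nhdsGT_zero (h : ContinuousAt (deriv f) 0) :
    Tendsto (deriv fun y => f |y|) (𝓝[>] 0) (𝓝 (deriv f 0)) :=
  (h.tendsto.mono_left nhdsWithin_le_nhds).congr'
    (eventually_nhdsWithin_of_forall fun _ hy => (deriv_comp_abs_of_pos hy).symm)

theorem tendsto_deriv_comp_abs_nhdsLT_zero (h : ContinuousAt (deriv f) 0) :
    Tendsto (deriv fun y => f |y|) (𝓝[<] 0) (𝓝 (-deriv f 0)) := by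
  have h' : ContinuousAt (fun y => -deriv f (-y)) 0 :=
    (h.comp_of_eq continuous_neg.continuousAt neg_zero).neg
  refine ((neg_zero (G := ℝ) ▸ h'.tendsto).mono_left nhdsWithin_le_nhds).congr'
    (eventually_nhdsWithin_of_forall fun _ hy => (deriv_comp_abs_of_neg hy).symm)

theorem contDiffOn_comp_abs {n : WithTop ℕ∞} (hf : ContDiff ℝ n f) :
    ContDiffOn ℝ n (fun y => f |y|) {0}ᶜ :=
  fun x hx => by
    rcases (mem_compl_singleton_iff.mp hx).lt_or_gt with hx | hx
    · exact ((hf.comp contDiff_neg).contDiffAt.congr_of_eventuallyEq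
        (comp_abs_eventuallyEq_of_neg hx)).contDiffWithinAt
    · exact (hf.contDiffAt.congr_of_eventuallyEq (comp_abs_eventuallyEq_of_pos hx)).contDiffWithinAt

end CompAbs

theorem Real.hasDerivAt_tanh (x : ℝ) : HasDerivAt tanh (1 / cosh x ^ 2) x := by
  have h := ((hasDerivAt_sinh x).div (hasDerivAt_cosh x) (cosh_pos x).ne').congr_deriv
    (show _ = 1 / cosh x ^ 2 by rw [← cosh_sq_sub_sinh_sq x]; ring)
  rwa [show sinh / cosh = tanh from (funext tanh_eq_sinh_div_cosh).symm] at h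

theorem hasDerivAt_mul_add_const (c a y : ℝ) : HasDerivAt (fun y => c * y + a) c y := by
  simpa using ((hasDerivAt_id y).const_mul c).add_const a

theorem artanh_eq_real_artanh {y : ℝ} (hy : y ∈ Icc (-1) 1) : _root_.artanh y = Real.artanh y :=
  (Real.artanh_eq_half_log hy).symm

noncomputable def sechProfile (p ω a y : ℝ) : ℝ :=
  ((p + 1) * ω / 2 * (1 / cosh ((p - 1) * √ω / 2 * y + a)) ^ 2) ^ (1 / (p - 1))

section SechProfile

variable {p ω : ℝ} (a : ℝ) (hp : 1 < p) (hω : 0 < ω)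
include hp hω

theorem sechProfile_base_pos (y : ℝ) :
    0 < (p + 1) * ω / 2 * (1 / cosh ((p - 1) * √ω / 2 * y + a)) ^ 2 := by
  have := cosh_pos ((p - 1) * √ω / 2 * y + a)
  have : 0 < p + 1 := by linarith
  positivity

theorem sechProfile_pos (y : ℝ) : 0 < sechProfile p ω a y :=
  rpow_pos_of_pos (sechProfile_base_pos a hp hω y) _

theorem sechProfile_rpow (y : ℝ) :
    sechProfile p ω a y ^ p =
      (p + 1) * ω / 2 * (1 / cosh ((p - 1) * √ω / 2 * y + a)) ^ 2 * sechProfile p ω a y := by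
  have hp1 : p - 1 ≠ 0 := by linarith
  rw [sechProfile, ← rpow_mul (sechProfile_base_pos a hp hω y).le,
    show 1 / (p - 1) * p = 1 + 1 / (p - 1) by field_simp; ring,
    rpow_add (sechProfile_base_pos a hp hω y), rpow_one]

theorem contDiff_sechProfile {n : WithTop ℕ∞} : ContDiff ℝ n (sechProfile p ω a) := by
  refine contDiff_iff_contDiffAt.2 fun y => ContDiffAt.rpow_const_of_ne ?_
    (sechProfile_base_pos a hp hω y).ne'
  exact contDiffAt_const.mul ((contDiffAt_const.div (contDiff_cosh.contDiffAt.comp _ (by fun_prop))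
    (cosh_pos _).ne').pow 2)

theorem hasDerivAt_sechProfile (y : ℝ) :
    HasDerivAt (sechProfile p ω a)
      (-√ω * tanh ((p - 1) * √ω / 2 * y + a) * sechProfile p ω a y) y := by
  have hu := hasDerivAt_mul_add_const ((p - 1) * √ω / 2) a y
  have hbase :=
    (((hasDerivAt_const y (1 : ℝ)).div hu.cosh (cosh_pos _).ne').pow 2).const_mul ((p + 1) * ω / 2)
  have hbase_pos := sechProfile_base_pos a hp hω y
  have hp1 : p - 1 ≠ 0 := by linarith
  convert hbase.rpow_const (p := 1 / (p - 1)) (Or.inl hbase_pos.ne') using 1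
  · rfl
  simp only [Pi.div_apply, Pi.pow_apply, Nat.cast_ofNat, Nat.add_one_sub_one, pow_one]
  rw [rpow_sub_one hbase_pos.ne', sechProfile, tanh_eq_sinh_div_cosh]
  generalize (p - 1) * √ω / 2 * y + a = u at *
  have := (cosh_pos u).ne'
  field_simp
  ring

theorem hasDerivAt_deriv_sechProfile (y : ℝ) :
    HasDerivAt (deriv (sechProfile p ω a))
      (ω * sechProfile p ω a y - sechProfile p ω a y ^ p) y := by
  have hderiv : deriv (sechProfile p ω a) =
      fun y => -√ω * tanh ((p - 1) * √ω / 2 * y + a) * sechProfile p ω a y :=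
    funext fun y => (hasDerivAt_sechProfile a hp hω y).deriv
  rw [hderiv]
  refine ((((hasDerivAt_tanh _).comp y (hasDerivAt_mul_add_const ((p - 1) * √ω / 2) a y)).const_mul (-√ω)).mul
    (hasDerivAt_sechProfile a hp hω y)).congr_deriv ?_
  rw [Function.comp_apply, sechProfile_rpow a hp hω, tanh_eq_sinh_div_cosh]
  generalize sechProfile p ω a y = q
  generalize (p - 1) * √ω / 2 * y + a = u
  have := (cosh_pos u).ne'
  field_simp
  linear_combination q * (2 * sinh u ^ 2 - (p - 1)) * sq_sqrt hω.le -
    2 * q * ω * cosh_sq_sub_sinh_sq u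

end SechProfile

theorem div_two_sqrt_mem_Ioo {γ ω : ℝ} (hω₀ : 0 < ω) (hω : γ ^ 2 / 4 < ω) :
    γ / (2 * √ω) ∈ Ioo (-1) 1 := by
  have h2s : 0 < 2 * √ω := mul_pos two_pos (sqrt_pos.2 hω₀)
  have hγ : |γ| < 2 * √ω :=
    abs_lt_of_sq_lt_sq (by rw [mul_pow, sq_sqrt hω₀.le]; linarith) h2s.le
  rw [mem_Ioo, ← abs_lt, abs_div, abs_of_pos h2s, div_lt_one h2s]
  exact hγ

theorem stmt0 (p γ ω : ℝ) (hp : 1 < p) (hω : γ ^ 2 / 4 < ω) :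
    (∀ x : ℝ, 0 < Qsol p γ ω x) ∧
    (∀ x : ℝ, Qsol p γ ω (-x) = Qsol p γ ω x) ∧
    Continuous (Qsol p γ ω) ∧
    ContDiffOn ℝ 2 (Qsol p γ ω) {(0 : ℝ)}ᶜ ∧
    (∀ x : ℝ, x ≠ 0 →
      -(deriv (deriv (Qsol p γ ω)) x) + ω * Qsol p γ ω x = Qsol p γ ω x ^ p) ∧
    ∃ Dp Dm : ℝ,
      Tendsto (deriv (Qsol p γ ω)) (nhdsWithin 0 (Ioi 0)) (nhds Dp) ∧
      Tendsto (deriv (Qsol p γ ω)) (nhdsWithin 0 (Iio 0)) (nhds Dm) ∧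
      Dp - Dm = -γ * Qsol p γ ω 0 := by
  have hω₀ : 0 < ω := (by positivity : 0 ≤ γ ^ 2 / 4).trans_lt hω
  have hγ := div_two_sqrt_mem_Ioo hω₀ hω
  have ha : tanh (_root_.artanh (γ / (2 * √ω))) = γ / (2 * √ω) := by
    rw [artanh_eq_real_artanh (Ioo_subset_Icc_self hγ), Real.tanh_artanh hγ]
  set a := _root_.artanh (γ / (2 * √ω))
  have hQ : Qsol p γ ω = fun x => sechProfile p ω a |x| := rfl
  have hq := contDiff_sechProfile a hp hω₀ (n := 2)
  have hq' : ContinuousAt (deriv (sechProfile p ω a)) 0 :=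
    (hasDerivAt_deriv_sechProfile a hp hω₀ 0).continuousAt
  rw [hQ]
  refine ⟨fun x => sechProfile_pos a hp hω₀ _, fun x => congrArg _ (abs_neg x),
    hq.continuous.comp continuous_abs, contDiffOn_comp_abs hq, fun x hx => ?_, _, _,
    tendsto_deriv_comp_abs_nhdsGT_zero hq', tendsto_deriv_comp_abs_nhdsLT_zero hq', ?_⟩
  · rw [deriv_deriv_comp_abs hx, (hasDerivAt_deriv_sechProfile a hp hω₀ _).deriv]
    ring
  · dsimp only
    rw [(hasDerivAt_sechProfile a hp hω₀ 0).deriv, abs_zero, mul_zero, zero_add, ha]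
    field_simp
    ring
end

section
/- Let p > 5 and γ ≤ 0. Then for every ω > γ²/4, the map ω ↦ ∫_ℝ Q_{ω,γ}(x)² dx has strictly negative derivative, i.e. d/dω ‖Q_{ω,γ}‖²_{L²(ℝ)} < 0. -/
open Real Filter Set MeasureTheory

/-!
With `b(ω) = artanh(γ/(2√ω))`, the substitution `y = ((p-1)√ω/2)|x| + b(ω)` gives
`‖Q_{ω,γ}‖² = C_p ω^(2/(p-1) - 1/2) ∫_{b(ω)}^∞ sech^(4/(p-1)) y dy`.
For `p > 5` the power of `ω` has negative exponent, and for `γ ≤ 0` the lower limit `b(ω)`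
is nondecreasing in `ω`, so the tail integral does not grow; hence the derivative is negative.
-/

theorem hasDerivAt_integral_Ioi {f : ℝ → ℝ} {a b : ℝ} (hf : Continuous f)
    (hint : IntegrableOn f (Ioi a)) (hab : a < b) :
    HasDerivAt (fun x => ∫ t in Ioi x, f t) (-f b) b := by
  have hprim : HasDerivAt (fun x => ∫ t in a..x, f t) (f b) b :=
    intervalIntegral.integral_hasDerivAt_right (hf.intervalIntegrable a b)
      hf.aestronglyMeasurable.stronglyMeasurableAtFilter hf.continuousAt
  have hdiff := ((hasDerivAt_const b (∫ t in Ioi a, f t)).sub hprim).congr_deriv (zero_sub _)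
  refine hdiff.congr_of_eventuallyEq ?_
  filter_upwards [lt_mem_nhds hab] with x hx
  rw [Pi.sub_apply, ← intervalIntegral.integral_Ioi_sub_Ioi hint hx.le, sub_sub_cancel]

theorem continuous_cosh_rpow (q : ℝ) : Continuous fun t => cosh t ^ q :=
  continuous_cosh.rpow_const fun t => Or.inl (cosh_pos t).ne'

theorem cosh_rpow_neg_le {q : ℝ} (hq : 0 ≤ q) (t : ℝ) :
    cosh t ^ (-q) ≤ 2 ^ q * exp (-q * t) := by
  have hexp : exp t / 2 ≤ cosh t := by
    rw [cosh_eq]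
    linarith [exp_pos (-t)]
  calc cosh t ^ (-q) ≤ (exp t / 2) ^ (-q) :=
        rpow_le_rpow_of_nonpos (by positivity) hexp (neg_nonpos.mpr hq)
    _ = 2 ^ q * exp (-q * t) := by
        rw [div_rpow (exp_pos t).le zero_le_two, ← exp_mul, div_eq_mul_inv,
          ← rpow_neg zero_le_two, neg_neg, mul_comm t, mul_comm]

theorem integrableOn_cosh_rpow_neg_Ioi {q : ℝ} (hq : 0 < q) (b : ℝ) :
    IntegrableOn (fun t => cosh t ^ (-q)) (Ioi b) := by
  refine Integrable.mono ((exp_neg_integrableOn_Ioi b hq).const_mul (2 ^ q))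
    (continuous_cosh_rpow _).aestronglyMeasurable.restrict (ae_of_all _ fun t => ?_)
  rw [norm_of_nonneg (rpow_nonneg (cosh_pos t).le _), norm_of_nonneg (by positivity)]
  exact cosh_rpow_neg_le hq.le t

noncomputable def sechPowTail (q b : ℝ) : ℝ := ∫ t in Ioi b, cosh t ^ (-q)

theorem sechPowTail_pos {q : ℝ} (hq : 0 < q) (b : ℝ) : 0 < sechPowTail q b := by
  rw [sechPowTail, setIntegral_pos_iff_support_of_nonneg_ae
    (ae_of_all _ fun t => rpow_nonneg (cosh_pos t).le _) (integrableOn_cosh_rpow_neg_Ioi hq b)]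
  have hsupp : Function.support (fun t => cosh t ^ (-q)) = univ :=
    eq_univ_of_forall fun t => (rpow_pos_of_pos (cosh_pos t) _).ne'
  simp [hsupp]

theorem hasDerivAt_sechPowTail {q : ℝ} (hq : 0 < q) (b : ℝ) :
    HasDerivAt (sechPowTail q) (-(cosh b ^ (-q))) b :=
  hasDerivAt_integral_Ioi (continuous_cosh_rpow _) (integrableOn_cosh_rpow_neg_Ioi hq (b - 1))
    (sub_one_lt b)

theorem integral_cosh_mul_abs_add_rpow_neg {a : ℝ} (ha : 0 < a) (b q : ℝ) :
    ∫ x, cosh (a * |x| + b) ^ (-q) = 2 / a * sechPowTail q b := by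
  have hshift : ∫ x in Ioi (0 : ℝ), cosh (x + b) ^ (-q) = sechPowTail q b := by
    simpa [sechPowTail] using (measurePreserving_add_right volume b).setIntegral_preimage_emb
      (measurableEmbedding_addRight b) (fun y => cosh y ^ (-q)) (Ioi b)
  rw [integral_comp_abs (f := fun x => cosh (a * x + b) ^ (-q)),
    integral_comp_mul_left_Ioi (fun y => cosh (y + b) ^ (-q)) 0 ha, mul_zero, hshift,
    smul_eq_mul]
  ring

theorem hasDerivAt_artanh {y : ℝ} (hy : y ∈ Ioo (-1) 1) :
    HasDerivAt _root_.artanh (1 - y ^ 2)⁻¹ y := by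
  have h₁ : 0 < 1 + y := by linarith [hy.1]
  have h₂ : 0 < 1 - y := by linarith [hy.2]
  have hlog : HasDerivAt (fun z => (1 / 2) * (log (1 + z) - log (1 - z)))
      ((1 / 2) * (1 / (1 + y) - (-1) / (1 - y))) y :=
    ((((hasDerivAt_id y).const_add 1).log h₁.ne').sub
      (((hasDerivAt_id y).const_sub 1).log h₂.ne')).const_mul _
  have hderiv : (1 / 2) * (1 / (1 + y) - (-1) / (1 - y)) = (1 - y ^ 2)⁻¹ := by
    rw [show 1 - y ^ 2 = (1 + y) * (1 - y) by ring]
    field_simp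
    ring
  refine (hlog.congr_deriv hderiv).congr_of_eventuallyEq ?_
  filter_upwards [isOpen_Ioo.mem_nhds hy] with z hz
  rw [_root_.artanh, log_div (by linarith [hz.1]) (by linarith [hz.2])]

theorem hasDerivAt_artanh_div_sqrt {γ ω : ℝ} (hω : γ ^ 2 / 4 < ω) :
    HasDerivAt (fun ω' => _root_.artanh (γ / (2 * √ω')))
      (-γ / (4 * √ω * (ω - γ ^ 2 / 4))) ω := by
  have hω0 : 0 < ω := (by positivity : 0 ≤ γ ^ 2 / 4).trans_lt hω
  have hy : γ / (2 * √ω) ∈ Ioo (-1) 1 := by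
    have hγ : |γ| < 2 * √ω :=
      abs_lt_of_sq_lt_sq (by rw [mul_pow, sq_sqrt hω0.le]; linarith) (by positivity)
    rwa [mem_Ioo, ← abs_lt, abs_div, abs_of_pos (by positivity : (0 : ℝ) < 2 * √ω),
      div_lt_one (by positivity)]
  have hlin := (hasDerivAt_const ω γ).fun_div ((hasDerivAt_sqrt hω0.ne').const_mul 2)
    (by positivity : 2 * √ω ≠ 0)
  refine ((hasDerivAt_artanh hy).comp ω hlin).congr_deriv ?_
  field_simp
  rw [sq_sqrt hω0.le]
  ring

theorem Qsol_sq {p : ℝ} (hp : 0 ≤ p + 1) (γ : ℝ) {ω : ℝ} (hω : 0 ≤ ω) (x : ℝ) :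
    Qsol p γ ω x ^ 2 = ((p + 1) / 2) ^ (2 / (p - 1)) * ω ^ (2 / (p - 1)) *
      cosh ((p - 1) * √ω / 2 * |x| + _root_.artanh (γ / (2 * √ω))) ^ (-(4 / (p - 1))) := by
  set c := cosh ((p - 1) * √ω / 2 * |x| + _root_.artanh (γ / (2 * √ω)))
  have hc : 0 < c := cosh_pos _
  have hbase : (p + 1) * ω / 2 * (1 / c) ^ 2 = (p + 1) / 2 * ω * c ^ (-2 : ℝ) := by
    rw [rpow_neg hc.le, rpow_two]
    field_simp
  rw [Qsol, hbase, ← rpow_two, ← rpow_mul (by positivity), mul_rpow (by positivity)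
    (by positivity), mul_rpow (by positivity) hω, ← rpow_mul hc.le]
  ring_nf

theorem integral_Qsol_sq {p : ℝ} (hp : 1 < p) (γ : ℝ) {ω : ℝ} (hω : 0 < ω) :
    ∫ x, Qsol p γ ω x ^ 2 = ((p + 1) / 2) ^ (2 / (p - 1)) * (4 / (p - 1)) *
      ω ^ (2 / (p - 1) - 1 / 2) *
        sechPowTail (4 / (p - 1)) (_root_.artanh (γ / (2 * √ω))) := by
  have hs : 0 < √ω := sqrt_pos.mpr hω
  simp_rw [Qsol_sq (by linarith : 0 ≤ p + 1) γ hω.le]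
  rw [integral_const_mul, integral_cosh_mul_abs_add_rpow_neg (by nlinarith),
    rpow_sub hω, sqrt_eq_rpow]
  field_simp
  ring

theorem stmt5 (p γ : ℝ) (hp : 5 < p) (hγ : γ ≤ 0) :
    ∀ ω : ℝ, γ ^ 2 / 4 < ω →
      ∃ m : ℝ, HasDerivAt (fun ω' : ℝ => ∫ x : ℝ, (Qsol p γ ω' x) ^ 2) m ω ∧ m < 0 := by
  intro ω hω
  have hω0 : 0 < ω := (by positivity : 0 ≤ γ ^ 2 / 4).trans_lt hω
  have hq : 0 < 4 / (p - 1) := div_pos four_pos (by linarith)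
  have hα : 2 / (p - 1) - 1 / 2 < 0 := by
    rw [sub_neg, div_lt_div_iff₀ (by linarith) two_pos]
    linarith
  set α := 2 / (p - 1) - 1 / 2
  set q := 4 / (p - 1)
  set C := ((p + 1) / 2) ^ (2 / (p - 1)) * q
  have hC : 0 < C := mul_pos (rpow_pos_of_pos (by linarith) _) hq
  set b := _root_.artanh (γ / (2 * √ω))
  set b' := -γ / (4 * √ω * (ω - γ ^ 2 / 4))
  have hpow := (hasDerivAt_rpow_const (p := α) (Or.inl hω0.ne')).const_mul C
  have htail := (hasDerivAt_sechPowTail hq b).comp ω (hasDerivAt_artanh_div_sqrt hω)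
  refine ⟨_, (hpow.mul htail).congr_of_eventuallyEq ?_, ?_⟩
  · filter_upwards [lt_mem_nhds hω0] with ω' hω'
    exact integral_Qsol_sq (by linarith) γ hω'
  have hb' : 0 ≤ b' := div_nonneg (neg_nonneg.2 hγ) (mul_nonneg (by positivity) (by linarith))
  have hshrink : C * (α * ω ^ (α - 1)) * sechPowTail q b < 0 :=
    mul_neg_of_neg_of_pos (mul_neg_of_pos_of_neg hC (mul_neg_of_neg_of_pos hα (by positivity)))
      (sechPowTail_pos hq b)
  have hshift : C * ω ^ α * (-cosh b ^ (-q) * b') ≤ 0 :=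
    mul_nonpos_of_nonneg_of_nonpos (by positivity)
      (mul_nonpos_of_nonpos_of_nonneg (neg_nonpos.2 (by positivity)) hb')
  exact add_neg_of_neg_of_nonpos hshrink hshift
end

section
/- Let p > 1, let γ₁, γ₂ ≤ 0, let ω₁ > γ₁²/4 and ω₂ > γ₂²/4, and let 0 < c < min(√ω₁, √ω₂). Then there exists a constant C > 0 such that for all y₁, y₂, v, μ ∈ ℝ, | ∫_ℝ Q_{ω₁,γ₁}(x − y₁) · Q_{ω₂,γ₂}(x − y₂) · e^{i(v·x + μ)} dx | ≤ C·e^{−c·|y₁ − y₂|}. (Exponential smallness of the overlap of two translated solitons.) -/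
/-!
Each profile decays like `Q_{ω,γ}(x) ≲ e^{-√ω |x|}`, because `sech y ≤ 2 e^{-y}` and the
exponent `1/(p-1)` exactly cancels the factor `(p-1)/2` inside the `sech²`. Splitting
`√ω₁ |x - y₁| + √ω₂ |x - y₂| ≥ c |y₁ - y₂| + (min(√ω₁, √ω₂) - c) |x - y₁|` by the triangle
inequality, the integrand is dominated by `e^{-c |y₁ - y₂|}` times an integrable function of `x`.
-/

open Real Complex MeasureTheory

lemma one_div_cosh_le_two_mul_exp_neg (y : ℝ) : 1 / Real.cosh y ≤ 2 * Real.exp (-y) := by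
  rw [div_le_iff₀ (Real.cosh_pos y), Real.cosh_eq]
  have h : Real.exp (-y) * Real.exp y = 1 := by rw [← Real.exp_add, neg_add_cancel, Real.exp_zero]
  nlinarith [sq_nonneg (Real.exp (-y))]

lemma Qsol_nonneg {p γ ω : ℝ} (hp : -1 ≤ p) (hω : 0 ≤ ω) (x : ℝ) : 0 ≤ Qsol p γ ω x :=
  Real.rpow_nonneg (mul_nonneg (by nlinarith) (sq_nonneg _)) _

lemma exists_abs_Qsol_le {p γ ω : ℝ} (hp : 1 < p) (hω : 0 < ω) :
    ∃ M > 0, ∀ x, |Qsol p γ ω x| ≤ M * Real.exp (-(Real.sqrt ω * |x|)) := by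
  have hp1 : 0 < p - 1 := by linarith
  set A := (p + 1) * ω / 2
  have hA : 0 < A := by positivity
  set θ := _root_.artanh (γ / (2 * Real.sqrt ω))
  refine ⟨(4 * A * Real.exp (-2 * θ)) ^ (1 / (p - 1)), by positivity, fun x => ?_⟩
  set y := (p - 1) * Real.sqrt ω / 2 * |x| + θ with hy
  have hbase : A * (1 / Real.cosh y) ^ 2 ≤
      4 * A * Real.exp (-2 * θ) * Real.exp (-((p - 1) * Real.sqrt ω * |x|)) :=
    calc A * (1 / Real.cosh y) ^ 2 ≤ A * (2 * Real.exp (-y)) ^ 2 := by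
          gcongr
          exact one_div_cosh_le_two_mul_exp_neg y
      _ = _ := by
          rw [mul_pow, ← Real.exp_nat_mul, mul_assoc (4 * A), ← Real.exp_add, hy]
          ring_nf
  rw [abs_of_nonneg (Qsol_nonneg (by linarith) hω.le x)]
  calc Qsol p γ ω x
      ≤ (4 * A * Real.exp (-2 * θ) * Real.exp (-((p - 1) * Real.sqrt ω * |x|))) ^ (1 / (p - 1)) :=
        Real.rpow_le_rpow (by positivity) hbase (by positivity)
    _ = _ := by
        rw [Real.mul_rpow (by positivity) (by positivity), ← Real.exp_mul]
        congr 2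
        field_simp

lemma integral_exp_neg_mul_abs {ε : ℝ} (hε : 0 < ε) : ∫ x : ℝ, Real.exp (-ε * |x|) = 2 / ε := by
  rw [integral_comp_abs (f := fun x => Real.exp (-ε * x)), integral_exp_mul_Ioi (by linarith)]
  field_simp
  simp

lemma integrable_exp_neg_mul_abs {ε : ℝ} (hε : 0 < ε) :
    Integrable fun x : ℝ => Real.exp (-ε * |x|) :=
  .of_integral_ne_zero (by rw [integral_exp_neg_mul_abs hε]; positivity)

lemma norm_integral_le_of_norm_le_exp_neg_mul_abs {E : Type*} [NormedAddCommGroup E]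
    [NormedSpace ℝ E] {f : ℝ → E} {K ε y : ℝ} (hε : 0 < ε)
    (hf : ∀ x, ‖f x‖ ≤ K * Real.exp (-ε * |x - y|)) :
    ‖∫ x, f x‖ ≤ K * (2 / ε) :=
  calc ‖∫ x, f x‖ ≤ ∫ x, K * Real.exp (-ε * |x - y|) :=
        norm_integral_le_of_norm_le (((integrable_exp_neg_mul_abs hε).comp_sub_right y).const_mul K)
          (.of_forall hf)
    _ = K * (2 / ε) := by
        rw [integral_const_mul, integral_sub_right_eq_self (fun x => Real.exp (-ε * |x|)),
          integral_exp_neg_mul_abs hε]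

lemma mul_abs_sub_add_mul_abs_le {a b c ε x y₁ y₂ : ℝ} (hc : 0 ≤ c) (ha : c + ε ≤ a)
    (hb : c ≤ b) : c * |y₁ - y₂| + ε * |x - y₁| ≤ a * |x - y₁| + b * |x - y₂| := by
  have htri : |y₁ - y₂| ≤ |x - y₁| + |x - y₂| := abs_sub_comm x y₁ ▸ abs_sub_le y₁ x y₂
  nlinarith [abs_nonneg (x - y₁), abs_nonneg (x - y₂)]

lemma abs_mul_comp_sub_le {f g : ℝ → ℝ} {M₁ M₂ a b c ε y₁ y₂ : ℝ} (hc : 0 ≤ c)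
    (ha : c + ε ≤ a) (hb : c ≤ b)
    (hf : ∀ x, |f x| ≤ M₁ * Real.exp (-(a * |x|))) (hg : ∀ x, |g x| ≤ M₂ * Real.exp (-(b * |x|)))
    (x : ℝ) :
    |f (x - y₁) * g (x - y₂)| ≤ M₁ * M₂ * Real.exp (-c * |y₁ - y₂|) * Real.exp (-ε * |x - y₁|) := by
  have hM₁ : 0 ≤ M₁ := by simpa using (abs_nonneg _).trans (hf 0)
  have hM₂ : 0 ≤ M₂ := by simpa using (abs_nonneg _).trans (hg 0)
  have hexponent := mul_abs_sub_add_mul_abs_le (x := x) (y₁ := y₁) (y₂ := y₂) hc ha hb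
  calc |f (x - y₁) * g (x - y₂)|
      ≤ (M₁ * Real.exp (-(a * |x - y₁|))) * (M₂ * Real.exp (-(b * |x - y₂|))) := by
        rw [abs_mul]
        exact mul_le_mul (hf _) (hg _) (abs_nonneg _) (mul_nonneg hM₁ (Real.exp_pos _).le)
    _ = M₁ * M₂ * Real.exp (-(a * |x - y₁|) + -(b * |x - y₂|)) := by
        rw [Real.exp_add]; ring
    _ ≤ M₁ * M₂ * Real.exp (-c * |y₁ - y₂|) * Real.exp (-ε * |x - y₁|) := by
        rw [mul_assoc _ (Real.exp _), ← Real.exp_add]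
        exact mul_le_mul_of_nonneg_left (Real.exp_le_exp.mpr (by linarith)) (by positivity)

theorem stmt9_general (p γ₁ γ₂ ω₁ ω₂ c : ℝ) (hp : 1 < p)
    (hω₁ : γ₁ ^ 2 / 4 < ω₁) (hω₂ : γ₂ ^ 2 / 4 < ω₂)
    (hc : 0 < c) (hc' : c < min (Real.sqrt ω₁) (Real.sqrt ω₂)) :
    ∃ C : ℝ, 0 < C ∧ ∀ y₁ y₂ v μ : ℝ,
      ‖∫ x : ℝ, ((Qsol p γ₁ ω₁ (x - y₁) : ℂ) * (Qsol p γ₂ ω₂ (x - y₂) : ℂ) *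
          Complex.exp (Complex.I * ((v : ℂ) * (x : ℂ) + (μ : ℂ))))‖
        ≤ C * Real.exp (-c * |y₁ - y₂|) := by
  obtain ⟨M₁, hM₁, hQ₁⟩ :=
    exists_abs_Qsol_le (γ := γ₁) hp ((by positivity : (0 : ℝ) ≤ _).trans_lt hω₁)
  obtain ⟨M₂, hM₂, hQ₂⟩ :=
    exists_abs_Qsol_le (γ := γ₂) hp ((by positivity : (0 : ℝ) ≤ _).trans_lt hω₂)
  set ε := min (Real.sqrt ω₁) (Real.sqrt ω₂) - c
  have hε : 0 < ε := sub_pos.mpr hc'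
  refine ⟨M₁ * M₂ * (2 / ε), by positivity, fun y₁ y₂ v μ => ?_⟩
  refine (norm_integral_le_of_norm_le_exp_neg_mul_abs
    (K := M₁ * M₂ * Real.exp (-c * |y₁ - y₂|)) (y := y₁) hε fun x => ?_).trans_eq (by ring)
  have hphase : ‖Complex.exp (Complex.I * ((v : ℂ) * (x : ℂ) + (μ : ℂ)))‖ = 1 := by
    rw [Complex.norm_exp]; simp
  rw [norm_mul, hphase, mul_one, ← Complex.ofReal_mul, Complex.norm_real, Real.norm_eq_abs]
  exact abs_mul_comp_sub_le hc.le (by simp [ε]) (hc'.le.trans (min_le_right _ _)) hQ₁ hQ₂ x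

theorem stmt9 (p γ₁ γ₂ ω₁ ω₂ c : ℝ) (hp : 1 < p) (hγ₁ : γ₁ ≤ 0) (hγ₂ : γ₂ ≤ 0)
    (hω₁ : γ₁ ^ 2 / 4 < ω₁) (hω₂ : γ₂ ^ 2 / 4 < ω₂)
    (hc : 0 < c) (hc' : c < min (Real.sqrt ω₁) (Real.sqrt ω₂)) :
    ∃ C : ℝ, 0 < C ∧ ∀ y₁ y₂ v μ : ℝ,
      ‖∫ x : ℝ, ((Qsol p γ₁ ω₁ (x - y₁) : ℂ) * (Qsol p γ₂ ω₂ (x - y₂) : ℂ) *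
          Complex.exp (Complex.I * ((v : ℂ) * (x : ℂ) + (μ : ℂ))))‖
        ≤ C * Real.exp (-c * |y₁ - y₂|) :=
  stmt9_general p γ₁ γ₂ ω₁ ω₂ c hp hω₁ hω₂ hc hc'
end

section
/- Let s ∈ (0, 2). Then for every x ≥ 0, x^{s/2} = ( sin(πs/2) / π ) · ∫₀^∞ t^{s/2 − 1} · ( x / (t + x) ) dt, where for x > 0 the integral converges absolutely (and for x = 0 both sides vanish). -/
open Real Set MeasureTheory

/-! With `a = s / 2`, the substitution `t = x u` turns the integral into
`x ^ a * ∫ u ^ (a - 1) / (1 + u)`, and `u ↦ u / (1 + u)` maps the latter onto the Beta integral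
`B(a, 1 - a) = Γ(a) Γ(1 - a) = π / sin (π a)` (Euler's reflection formula). -/

theorem integral_rpow_mul_one_sub_rpow {a b : ℝ} (ha : 0 < a) (hb : 0 < b) :
    ∫ x in (0 : ℝ)..1, x ^ (a - 1) * (1 - x) ^ (b - 1) = Gamma a * Gamma b / Gamma (a + b) := by
  have hB := Complex.betaIntegral_eq_Gamma_mul_div a b (by simpa using ha) (by simpa using hb)
  have hcongr :
      EqOn (fun x : ℝ => (x : ℂ) ^ ((a : ℂ) - 1) * (1 - (x : ℂ)) ^ ((b : ℂ) - 1))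
      (fun x : ℝ => ((x ^ (a - 1) * (1 - x) ^ (b - 1) : ℝ) : ℂ)) (uIcc 0 1) := by
    intro x hx
    rw [uIcc_of_le zero_le_one] at hx
    simp only [Complex.ofReal_mul, Complex.ofReal_cpow hx.1,
      Complex.ofReal_cpow (sub_nonneg.2 hx.2), Complex.ofReal_sub, Complex.ofReal_one]
  rw [Complex.betaIntegral, intervalIntegral.integral_congr hcongr,
    intervalIntegral.integral_ofReal, ← Complex.ofReal_add, Complex.Gamma_ofReal,
    Complex.Gamma_ofReal, Complex.Gamma_ofReal] at hB
  exact_mod_cast hB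

theorem image_div_one_add_Ioi : (fun t : ℝ => t / (1 + t)) '' Ioi 0 = Ioo 0 1 := by
  ext y
  constructor
  · rintro ⟨t, ht, rfl⟩
    have h1t : (0 : ℝ) < 1 + t := by linarith [mem_Ioi.1 ht]
    exact ⟨div_pos ht h1t, (div_lt_one h1t).2 (by linarith)⟩
  · rintro ⟨hy0, hy1⟩
    refine ⟨y / (1 - y), div_pos hy0 (by linarith), ?_⟩
    have : (1 : ℝ) - y ≠ 0 := by linarith
    field_simp
    ring

theorem integral_Ioi_rpow_div_one_add_rpow {a b : ℝ} (ha : 0 < a) (hb : 0 < b) :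
    ∫ t in Ioi (0 : ℝ), t ^ (a - 1) / (1 + t) ^ (a + b) =
      Gamma a * Gamma b / Gamma (a + b) := by
  have hderiv : ∀ t ∈ Ioi (0 : ℝ),
      HasDerivWithinAt (fun t : ℝ => t / (1 + t)) (((1 + t) ^ 2)⁻¹) (Ioi 0) t := by
    intro t ht
    have h1t : (1 : ℝ) + t ≠ 0 := by have := mem_Ioi.1 ht; positivity
    have hquot : HasDerivAt (fun t : ℝ => t / (1 + t)) ((1 * (1 + t) - t * 1) / (1 + t) ^ 2) t :=
      (hasDerivAt_id t).div ((hasDerivAt_id t).const_add 1) h1t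
    rw [show (1 * (1 + t) - t * 1) / (1 + t) ^ 2 = ((1 + t) ^ 2)⁻¹ by ring] at hquot
    exact hquot.hasDerivWithinAt
  have hinj : InjOn (fun t : ℝ => t / (1 + t)) (Ioi 0) := by
    intro t₁ ht₁ t₂ ht₂ h
    have h1 : (1 : ℝ) + t₁ ≠ 0 := by have := mem_Ioi.1 ht₁; positivity
    have h2 : (1 : ℝ) + t₂ ≠ 0 := by have := mem_Ioi.1 ht₂; positivity
    field_simp at h
    linarith
  have hsubst := integral_image_eq_integral_abs_deriv_smul measurableSet_Ioi hderiv hinj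
    (fun x : ℝ => x ^ (a - 1) * (1 - x) ^ (b - 1))
  rw [image_div_one_add_Ioi, integral_Ioc_eq_integral_Ioo.symm,
    ← intervalIntegral.integral_of_le zero_le_one, integral_rpow_mul_one_sub_rpow ha hb] at hsubst
  rw [hsubst]
  refine setIntegral_congr_fun measurableSet_Ioi fun t ht => ?_
  have ht : 0 < t := ht
  have hw : 0 < (1 + t)⁻¹ := by positivity
  have h1 : 1 - t / (1 + t) = (1 + t)⁻¹ := by field_simp; ring
  rw [smul_eq_mul, abs_of_pos (by positivity), h1, div_eq_mul_inv t, mul_rpow ht.le hw.le,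
    div_eq_mul_inv, ← inv_rpow (by positivity), ← inv_pow]
  have hexp : (1 + t)⁻¹ ^ (a + b) =
      (1 + t)⁻¹ ^ (a - 1) * (1 + t)⁻¹ ^ (b - 1) * (1 + t)⁻¹ ^ 2 := by
    rw [← rpow_natCast, ← rpow_add hw, ← rpow_add hw]
    congr 1
    push_cast
    ring
  rw [hexp]
  ring

theorem integrableOn_Ioi_rpow_div_one_add_rpow {a b : ℝ} (ha : 0 < a) (hb : 0 < b) :
    IntegrableOn (fun t : ℝ => t ^ (a - 1) / (1 + t) ^ (a + b)) (Ioi 0) := by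
  -- the integral of a non-integrable function is `0`, and this one is a positive Gamma quotient
  refine Integrable.of_integral_ne_zero ?_
  rw [integral_Ioi_rpow_div_one_add_rpow ha hb]
  have := Gamma_pos_of_pos ha
  have := Gamma_pos_of_pos hb
  have := Gamma_pos_of_pos (add_pos ha hb)
  positivity

theorem integrableOn_Ioi_rpow_div_one_add {a : ℝ} (ha0 : 0 < a) (ha1 : a < 1) :
    IntegrableOn (fun t : ℝ => t ^ (a - 1) / (1 + t)) (Ioi 0) := by
  simpa using integrableOn_Ioi_rpow_div_one_add_rpow ha0 (sub_pos.2 ha1)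

theorem integral_Ioi_rpow_div_one_add {a : ℝ} (ha0 : 0 < a) (ha1 : a < 1) :
    ∫ t in Ioi (0 : ℝ), t ^ (a - 1) / (1 + t) = π / sin (π * a) := by
  simpa [Gamma_mul_Gamma_one_sub] using
    integral_Ioi_rpow_div_one_add_rpow ha0 (sub_pos.2 ha1)

section Scaling

variable {E : Type*} [NormedAddCommGroup E] [NormedSpace ℝ E] {a c : ℝ}

theorem rpow_sub_one_smul_comp_div_mul_eqOn (hc : 0 < c) (g : ℝ → E) :
    EqOn (fun u : ℝ => (c * u) ^ (a - 1) • g (c * u / c))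
      (fun u => c ^ (a - 1) • (u ^ (a - 1) • g u)) (Ioi 0) := by
  intro u hu
  simp only [mul_rpow hc.le (le_of_lt hu), mul_div_cancel_left₀ u hc.ne', mul_smul]

theorem integrableOn_Ioi_rpow_sub_one_smul_comp_div_iff (hc : 0 < c) (g : ℝ → E) :
    IntegrableOn (fun t : ℝ => t ^ (a - 1) • g (t / c)) (Ioi 0) ↔
      IntegrableOn (fun u : ℝ => u ^ (a - 1) • g u) (Ioi 0) := by
  have hscale := integrableOn_Ioi_comp_mul_left_iff (fun t : ℝ => t ^ (a - 1) • g (t / c)) 0 hc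
  rw [mul_zero] at hscale
  rw [← hscale,
    integrableOn_congr_fun (rpow_sub_one_smul_comp_div_mul_eqOn hc g) measurableSet_Ioi,
    IntegrableOn, IntegrableOn]
  exact integrable_smul_iff (rpow_pos_of_pos hc _).ne' _

theorem integral_Ioi_rpow_sub_one_smul_comp_div (hc : 0 < c) (g : ℝ → E) :
    ∫ t in Ioi (0 : ℝ), t ^ (a - 1) • g (t / c) =
      c ^ a • ∫ u in Ioi (0 : ℝ), u ^ (a - 1) • g u := by
  rw [← mul_zero c, ← integral_comp_mul_left_Ioi' _ _ hc,
    setIntegral_congr_fun measurableSet_Ioi (rpow_sub_one_smul_comp_div_mul_eqOn hc g),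
    integral_smul, smul_smul, rpow_sub_one hc.ne', mul_div_cancel₀ _ hc.ne', mul_zero]

end Scaling

theorem stmt12 (s : ℝ) (hs0 : 0 < s) (hs2 : s < 2) :
    (∀ x : ℝ, 0 < x →
      IntegrableOn (fun t : ℝ => t ^ (s / 2 - 1) * (x / (t + x))) (Ioi 0)) ∧
    (∀ x : ℝ, 0 ≤ x →
      x ^ (s / 2)
        = (Real.sin (Real.pi * s / 2) / Real.pi) *
            ∫ t in Ioi (0 : ℝ), t ^ (s / 2 - 1) * (x / (t + x))) := by
  have ha0 : 0 < s / 2 := by positivity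
  have ha1 : s / 2 < 1 := by linarith
  have hkernel : ∀ x : ℝ, x ≠ 0 → (fun t : ℝ => t ^ (s / 2 - 1) * (x / (t + x))) =
      fun t => t ^ (s / 2 - 1) • (1 + t / x)⁻¹ := by
    intro x hx
    funext t
    rw [smul_eq_mul, one_add_div hx, inv_div, add_comm]
  have hcore :
      (fun u : ℝ => u ^ (s / 2 - 1) • (1 + u)⁻¹) = fun u => u ^ (s / 2 - 1) / (1 + u) := by
    funext u
    rw [smul_eq_mul, ← div_eq_mul_inv]
  refine ⟨fun x hx => ?_, fun x hx => ?_⟩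
  · rw [hkernel x hx.ne',
      integrableOn_Ioi_rpow_sub_one_smul_comp_div_iff hx (fun u => (1 + u)⁻¹), hcore]
    exact integrableOn_Ioi_rpow_div_one_add ha0 ha1
  · rcases hx.eq_or_lt with rfl | hx
    · simp [zero_rpow ha0.ne']
    have hsin : 0 < sin (π * (s / 2)) :=
      sin_pos_of_pos_of_lt_pi (by positivity) (by nlinarith [pi_pos])
    rw [hkernel x hx.ne', integral_Ioi_rpow_sub_one_smul_comp_div hx (fun u => (1 + u)⁻¹), hcore,
      integral_Ioi_rpow_div_one_add ha0 ha1, show π * s / 2 = π * (s / 2) by ring, smul_eq_mul,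
      mul_left_comm, div_mul_div_cancel₀ pi_ne_zero, div_self hsin.ne', mul_one]
end

section
/- Let s > 0, λ > 0, and a ∈ ℝ with max(0, (1 − 2s)/4) < a ≤ 1. Then K := ( ∫_ℝ (η² + λ)^{−s−2a} dη )^{1/2} is finite, and for every t ≥ 0 and every measurable h : ℝ → ℂ such that η ↦ (η² + λ)^{s/2}·h(η) belongs to L²(ℝ; ℂ), the function η ↦ h(η)/(η² + λ + t) is integrable and | ∫_ℝ h(η)/(η² + λ + t) dη | ≤ K · (λ + t)^{−(1−a)} · ‖ (η² + λ)^{s/2}·h ‖_{L²}. -/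
/-!
Since η² + λ + t ≥ (η² + λ)^a (λ + t)^(1-a), the multiplier (η² + λ)^(-s/2) / (η² + λ + t) is
pointwise bounded by (λ + t)^(-(1-a)) (η² + λ)^(-s/2-a), whose square is integrable because
s + 2a > 1/2. Writing h / (η² + λ + t) as this multiplier times (η² + λ)^(s/2) h, the bound is
Cauchy–Schwarz.
-/

open Real Complex MeasureTheory
open scoped ENNReal

lemma integrable_rpow_neg_sq_add {lam r : ℝ} (hlam : 0 < lam) (hr : 1 / 2 < r) :
    Integrable (fun η : ℝ => (η ^ 2 + lam) ^ (-r)) := by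
  have hbracket := ((integrable_rpow_neg_one_add_norm_sq (E := ℝ) (μ := volume) (r := 2 * r)
    (by simp; linarith)).comp_div (Real.sqrt_ne_zero'.2 hlam)).const_mul (lam ^ (-r))
  refine hbracket.congr (ae_of_all _ fun η => ?_)
  have hscale : η ^ 2 + lam = lam * (1 + ‖η / √lam‖ ^ 2) := by
    rw [norm_div, Real.norm_eq_abs, Real.norm_of_nonneg (Real.sqrt_nonneg _), div_pow, sq_abs,
      Real.sq_sqrt hlam.le]
    field_simp
    ring
  dsimp only
  rw [hscale, Real.mul_rpow hlam.le (by positivity), neg_div, mul_div_cancel_left₀ _ two_ne_zero]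

section

variable {α E : Type*} [MeasurableSpace α] {μ : Measure α} [NormedAddCommGroup E]

lemma eLpNorm_two_le_of_sq_le {f : α → E} {w : α → ℝ} {c : ℝ}
    (hw : Integrable w μ) (hc : 0 ≤ c) (hfw : ∀ᵐ x ∂μ, ‖f x‖ ^ 2 ≤ c ^ 2 * w x) :
    eLpNorm f 2 μ ≤ ENNReal.ofReal (√(∫ x, w x ∂μ) * c) := by
  have hcw : 0 ≤ᵐ[μ] fun x => c ^ 2 * w x :=
    hfw.mono fun x hx => (sq_nonneg _).trans hx
  rw [eLpNorm_eq_lintegral_rpow_enorm_toReal two_ne_zero ENNReal.ofNat_ne_top]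
  calc (∫⁻ x, ‖f x‖ₑ ^ (2 : ℝ≥0∞).toReal ∂μ) ^ (1 / (2 : ℝ≥0∞).toReal)
      ≤ (∫⁻ x, ENNReal.ofReal (c ^ 2 * w x) ∂μ) ^ (1 / (2 : ℝ)) := by
        refine ENNReal.rpow_le_rpow (lintegral_mono_ae (hfw.mono fun x hx => ?_)) (by norm_num)
        rw [← ofReal_norm, ENNReal.toReal_ofNat,
          ENNReal.ofReal_rpow_of_nonneg (norm_nonneg _) (by norm_num)]
        exact ENNReal.ofReal_le_ofReal (by simpa using hx)
    _ = ENNReal.ofReal (√(∫ x, w x ∂μ) * c) := by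
        rw [← ofReal_integral_eq_lintegral_ofReal (hw.const_mul _) hcw,
          ENNReal.ofReal_rpow_of_nonneg (integral_nonneg_of_ae hcw) (by norm_num),
          ← Real.sqrt_eq_rpow, integral_const_mul, Real.sqrt_mul (sq_nonneg c), Real.sqrt_sq hc,
          mul_comm]

lemma norm_integral_smul_le_eLpNorm_mul_eLpNorm {p q : ℝ≥0∞} [NormedSpace ℝ E]
    [p.HolderTriple q 1] {φ : α → ℝ} {f : α → E} (hφ : MemLp φ p μ) (hf : MemLp f q μ) :
    ‖∫ x, φ x • f x ∂μ‖ ≤ (eLpNorm φ p μ).toReal * (eLpNorm f q μ).toReal := by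
  calc ‖∫ x, φ x • f x ∂μ‖ ≤ ∫ x, ‖φ x • f x‖ ∂μ := norm_integral_le_integral_norm _
    _ = (eLpNorm (φ • f) 1 μ).toReal := by
      rw [eLpNorm_one_eq_lintegral_enorm]
      exact integral_norm_eq_lintegral_enorm (hφ.1.smul hf.1)
    _ ≤ (eLpNorm φ p μ * eLpNorm f q μ).toReal :=
      ENNReal.toReal_mono (ENNReal.mul_ne_top hφ.eLpNorm_ne_top hf.eLpNorm_ne_top)
        (eLpNorm_smul_le_mul_eLpNorm hf.1 hφ.1)
    _ = _ := ENNReal.toReal_mul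

end

lemma rpow_mul_rpow_one_sub_le {x y z a : ℝ} (hx : 0 ≤ x) (hy : 0 ≤ y) (hxz : x ≤ z)
    (hyz : y ≤ z) (ha0 : 0 ≤ a) (ha1 : a ≤ 1) : x ^ a * y ^ (1 - a) ≤ z :=
  (geom_mean_le_arith_mean2_weighted ha0 (sub_nonneg.2 ha1) hx hy (by ring)).trans (by nlinarith)

lemma inv_add_le_rpow_mul_rpow {x lam t a : ℝ} (hlam : 0 < lam) (hx : lam ≤ x) (ht : 0 ≤ t)
    (ha0 : 0 ≤ a) (ha1 : a ≤ 1) : (x + t)⁻¹ ≤ x ^ (-a) * (lam + t) ^ (-(1 - a)) := by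
  rw [Real.rpow_neg (by linarith), Real.rpow_neg (by linarith), ← mul_inv]
  exact inv_anti₀ (by positivity [hlam.trans_le hx])
    (rpow_mul_rpow_one_sub_le (by linarith) (by linarith) (by linarith) (by linarith) ha0 ha1)

lemma sq_rpow_div_add_le {x lam t s a : ℝ} (hlam : 0 < lam) (hx : lam ≤ x) (ht : 0 ≤ t)
    (ha0 : 0 ≤ a) (ha1 : a ≤ 1) :
    (x ^ (-(s / 2)) / (x + t)) ^ 2 ≤ ((lam + t) ^ (-(1 - a))) ^ 2 * x ^ (-s - 2 * a) := by
  have hx0 : 0 < x := hlam.trans_le hx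
  calc (x ^ (-(s / 2)) / (x + t)) ^ 2 = x ^ (-s) * ((x + t)⁻¹) ^ 2 := by
        rw [div_pow, div_eq_mul_inv, inv_pow, ← Real.rpow_mul_natCast hx0.le]
        ring_nf
    _ ≤ x ^ (-s) * (x ^ (-a) * (lam + t) ^ (-(1 - a))) ^ 2 := by
        gcongr
        exact inv_add_le_rpow_mul_rpow hlam hx ht ha0 ha1
    _ = ((lam + t) ^ (-(1 - a))) ^ 2 * x ^ (-s - 2 * a) := by
        rw [mul_pow, ← Real.rpow_mul_natCast hx0.le,
          show -s - 2 * a = -s + -a * (2 : ℕ) by push_cast; ring, Real.rpow_add hx0]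
        ring

theorem stmt15_general (s lam a : ℝ) (hlam : 0 < lam)
    (ha : max 0 ((1 - 2 * s) / 4) < a) (ha1 : a ≤ 1) :
    Integrable (fun η : ℝ => (η ^ 2 + lam) ^ (-s - 2 * a)) ∧
    ∀ t : ℝ, 0 ≤ t → ∀ h : ℝ → ℂ,
      MemLp (fun η : ℝ => (((η ^ 2 + lam) ^ (s / 2) : ℝ) : ℂ) * h η) 2 (volume : Measure ℝ) →
        Integrable (fun η : ℝ => h η / (((η ^ 2 + lam + t : ℝ)) : ℂ)) ∧
        ‖∫ η : ℝ, h η / (((η ^ 2 + lam + t : ℝ)) : ℂ)‖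
          ≤ Real.sqrt (∫ η : ℝ, (η ^ 2 + lam) ^ (-s - 2 * a)) * (lam + t) ^ (-(1 - a)) *
            (eLpNorm (fun η : ℝ => (((η ^ 2 + lam) ^ (s / 2) : ℝ) : ℂ) * h η) 2
              (volume : Measure ℝ)).toReal := by
  have ha0 : 0 < a := (le_max_left _ _).trans_lt ha
  have hw : Integrable (fun η : ℝ => (η ^ 2 + lam) ^ (-s - 2 * a)) := by
    simpa only [neg_add'] using integrable_rpow_neg_sq_add hlam
      (r := s + 2 * a) (by linarith [(le_max_right 0 ((1 - 2 * s) / 4)).trans_lt ha])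
  refine ⟨hw, fun t ht h hu => ?_⟩
  set g : ℝ → ℝ := fun η => (η ^ 2 + lam) ^ (-(s / 2)) / (η ^ 2 + lam + t)
  have hquot : (fun η : ℝ => h η / (((η ^ 2 + lam + t : ℝ)) : ℂ))
      = fun η => g η • ((((η ^ 2 + lam) ^ (s / 2) : ℝ) : ℂ) * h η) := by
    funext η
    have hx : 0 < η ^ 2 + lam := by positivity
    simp only [g, Complex.real_smul, Complex.ofReal_div]
    rw [div_mul_eq_mul_div, ← mul_assoc, ← Complex.ofReal_mul, ← Real.rpow_add hx]
    simp [div_eq_inv_mul]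
  have hg : eLpNorm g 2 volume
      ≤ ENNReal.ofReal (√(∫ η : ℝ, (η ^ 2 + lam) ^ (-s - 2 * a)) * (lam + t) ^ (-(1 - a))) :=
    eLpNorm_two_le_of_sq_le hw (by positivity) (ae_of_all _ fun η => by
      simpa [Real.norm_eq_abs, sq_abs] using
        sq_rpow_div_add_le (s := s) hlam (le_add_of_nonneg_left (sq_nonneg η)) ht ha0.le ha1)
  have hgL2 : MemLp g 2 volume := ⟨by fun_prop, hg.trans_lt ENNReal.ofReal_lt_top⟩
  rw [hquot]
  refine ⟨memLp_one_iff_integrable.1 (hu.smul hgL2), ?_⟩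
  calc _ ≤ _ := norm_integral_smul_le_eLpNorm_mul_eLpNorm hgL2 hu
    _ ≤ _ := by gcongr; exact ENNReal.toReal_le_of_le_ofReal (by positivity) hg

theorem stmt15 (s lam a : ℝ) (hs : 0 < s) (hlam : 0 < lam)
    (ha : max 0 ((1 - 2 * s) / 4) < a) (ha1 : a ≤ 1) :
    Integrable (fun η : ℝ => (η ^ 2 + lam) ^ (-s - 2 * a)) ∧
    ∀ t : ℝ, 0 ≤ t → ∀ h : ℝ → ℂ,
      MemLp (fun η : ℝ => (((η ^ 2 + lam) ^ (s / 2) : ℝ) : ℂ) * h η) 2 (volume : Measure ℝ) →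
        Integrable (fun η : ℝ => h η / (((η ^ 2 + lam + t : ℝ)) : ℂ)) ∧
        ‖∫ η : ℝ, h η / (((η ^ 2 + lam + t : ℝ)) : ℂ)‖
          ≤ Real.sqrt (∫ η : ℝ, (η ^ 2 + lam) ^ (-s - 2 * a)) * (lam + t) ^ (-(1 - a)) *
            (eLpNorm (fun η : ℝ => (((η ^ 2 + lam) ^ (s / 2) : ℝ) : ℂ) * h η) 2
              (volume : Measure ℝ)).toReal :=
  stmt15_general s lam a hlam ha ha1
end
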